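/- Let Φ be an irreducible root system with base {α₁,…,αₙ} and maximal short root β. Let u ∈ Δ be a vector in the fundamental Weyl cell with β*(u) = 1, supported on I_u ⊆ {1,…,n} in the fundamental weight basis, u ∉ Ω_G. Then every root in Ψ_u = {α ∈ Φ⁺ : α*(u) ∈ {0,1}} ∪ (−{α ∈ Φ⁺ : α*(u) ∈ {0,1}}) is an integral linear combination of the vectors {αᵢ : i ∉ I_u} ∪ {−β} with all coefficients of the same sign (all ≥ 0 or all ≤ 0); in particular {αᵢ : i ∉ I_u} ∪ {−β} is a base for the root subsystem Φ_u. -/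

import Mathlib

open scoped BigOperators

/-- The coroot pairing `α*(x) = 2(x,α)/(α,α)`. -/
noncomputable def coPair {V : Type*} [NormedAddCommGroup V] [InnerProductSpace ℝ V]
    (a x : V) : ℝ :=
  2 * (inner ℝ x a : ℝ) / (inner ℝ a a : ℝ)

/-- `v` is a sum of the vectors `Δ i` with nonnegative integer coefficients. -/
def IsNNComb {V : Type*} [AddCommGroup V] [Module ℝ V] {n : ℕ}
    (Δ : Fin n → V) (v : V) : Prop :=
  ∃ c : Fin n → ℕ, v = ∑ i, (c i : ℝ) • Δ i

/-- A crystallographic, irreducible root system `Φ` with base (simple roots) `Δ`. -/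
structure IsIrreducibleRootSystem {V : Type*} [NormedAddCommGroup V] [InnerProductSpace ℝ V]
    {n : ℕ} (Φ : Finset V) (Δ : Fin n → V) : Prop where
  zero_not_mem : (0 : V) ∉ Φ
  base_mem : ∀ i, Δ i ∈ Φ
  crystallographic : ∀ a ∈ Φ, ∀ b ∈ Φ, ∃ k : ℤ, coPair a b = (k : ℝ)
  reflect_mem : ∀ a ∈ Φ, ∀ b ∈ Φ, b - coPair a b • a ∈ Φ
  base_expansion : ∀ a ∈ Φ, ∃ c : Fin n → ℤ,
    ((∀ i, 0 ≤ c i) ∨ (∀ i, c i ≤ 0)) ∧ a = ∑ i, (c i : ℝ) • Δ i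
  irreducible : ∀ S ⊆ Φ, S.Nonempty →
    (∀ a ∈ S, ∀ b ∈ Φ, b ∉ S → (inner ℝ a b : ℝ) = 0) → S = Φ

/-- A positive root: a root which is a nonnegative integral combination of simple roots. -/
def IsPositiveRoot {V : Type*} [NormedAddCommGroup V] [InnerProductSpace ℝ V] {n : ℕ}
    (Φ : Finset V) (Δ : Fin n → V) (a : V) : Prop :=
  a ∈ Φ ∧ IsNNComb Δ a

/-- `β` is the maximal (highest) short root of `Φ` w.r.t. the base `Δ`. -/
def IsMaximalShortRoot {V : Type*} [NormedAddCommGroup V] [InnerProductSpace ℝ V] {n : ℕ}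
    (Φ : Finset V) (Δ : Fin n → V) (β : V) : Prop :=
  β ∈ Φ ∧ (∀ a ∈ Φ, ‖β‖ ≤ ‖a‖) ∧ ∀ a ∈ Φ, ‖a‖ = ‖β‖ → IsNNComb Δ (β - a)

/-- `γ` is the maximal (highest) long root of `Φ` w.r.t. the base `Δ`. -/
def IsMaximalLongRoot {V : Type*} [NormedAddCommGroup V] [InnerProductSpace ℝ V] {n : ℕ}
    (Φ : Finset V) (Δ : Fin n → V) (γ : V) : Prop :=
  γ ∈ Φ ∧ (∀ a ∈ Φ, ‖a‖ ≤ ‖γ‖) ∧ ∀ a ∈ Φ, ‖a‖ = ‖γ‖ → IsNNComb Δ (γ - a)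

/-- `ω` is the family of fundamental dominant weights dual to the simple coroots of `Δ`. -/
def IsFundamentalWeights {V : Type*} [NormedAddCommGroup V] [InnerProductSpace ℝ V] {n : ℕ}
    (Δ : Fin n → V) (ω : Fin n → V) : Prop :=
  ∀ i j, coPair (Δ j) (ω i) = if i = j then 1 else 0

/-!
For `u = ∑_{i ∈ I} λᵢ ωᵢ` we have `⟪u, Δ j⟫ ≥ 0`, with equality exactly for `j ∉ I`. A nonnegative combination of
simple roots that is orthogonal to `u` therefore only involves the `Δ i` with `i ∉ I`; this
settles the roots with `α*(u) = 0`. For a short root `σ`, `β - σ` is a nonnegative combination,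
so `2⟪u, σ⟫ ≤ ⟪β, β⟫ = 2⟪u, β⟫`, with equality iff `β - σ` is orthogonal to `u`. A long root `b`
with `b*(u) = 1` is, by irreducibility, not orthogonal to some short root `σ`; the
crystallographic condition makes `σ` and `b - σ` short roots with `⟪b, b⟫ = 2⟪β, β⟫`, so both
attain the bound and `2β - b = (β - σ) + (β - (b - σ))`. Negatives are handled by symmetry.
-/

open scoped RealInnerProductSpace

section

variable {V : Type*} [NormedAddCommGroup V] [InnerProductSpace ℝ V] {n : ℕ}
  {Δ : Fin n → V} {I : Finset (Fin n)}

lemma coPair_eq_iff {a : V} (ha : a ≠ 0) (x : V) (k : ℝ) :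
    coPair a x = k ↔ 2 * ⟪x, a⟫ = k * ⟪a, a⟫ := by
  rw [coPair, div_eq_iff (inner_self_ne_zero.2 ha)]

lemma coPair_eq_zero_iff {a x : V} : coPair a x = 0 ↔ ⟪x, a⟫ = 0 := by
  by_cases ha : a = 0
  · simp [coPair, ha]
  · simpa using coPair_eq_iff ha x 0

lemma norm_eq_norm_iff_inner_self_eq {a b : V} : ‖a‖ = ‖b‖ ↔ ⟪a, a⟫ = ⟪b, b⟫ := by
  rw [real_inner_self_eq_norm_sq, real_inner_self_eq_norm_sq,
    sq_eq_sq₀ (norm_nonneg a) (norm_nonneg b)]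

def rootsOfLength (Φ : Finset V) (r : V) : Set V := {σ | σ ∈ Φ ∧ ⟪σ, σ⟫ = ⟪r, r⟫}

lemma inner_eq_zero_of_mem_span {S : Set V} {b x : V} (hb : ∀ σ ∈ S, ⟪b, σ⟫ = 0)
    (hx : x ∈ Submodule.span ℝ S) : ⟪b, x⟫ = 0 :=
  Submodule.mem_orthogonal_singleton_iff_inner_right.1 <|
    Submodule.span_le.2
      (fun σ hσ => Submodule.mem_orthogonal_singleton_iff_inner_right.2 (hb σ hσ)) hx

def IsNNCombOff (Δ : Fin n → V) (I : Finset (Fin n)) (v : V) : Prop :=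
  ∃ c : Fin n → ℕ, (∀ i ∈ I, c i = 0) ∧ v = ∑ i, (c i : ℝ) • Δ i

lemma IsNNCombOff.add {v w : V} (hv : IsNNCombOff Δ I v) (hw : IsNNCombOff Δ I w) :
    IsNNCombOff Δ I (v + w) := by
  obtain ⟨c, hcI, rfl⟩ := hv
  obtain ⟨e, heI, rfl⟩ := hw
  refine ⟨c + e, fun i hi => by simp [hcI i hi, heI i hi], ?_⟩
  simp only [Pi.add_apply, Nat.cast_add, add_smul, Finset.sum_add_distrib]

def IsSameSignComb (Δ : Fin n → V) (I : Finset (Fin n)) (β a : V) : Prop :=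
  ∃ (c : Fin n → ℤ) (d : ℤ),
    (((∀ i, 0 ≤ c i) ∧ 0 ≤ d) ∨ ((∀ i, c i ≤ 0) ∧ d ≤ 0)) ∧
    (∀ i ∈ I, c i = 0) ∧
    a = (∑ i, (c i : ℝ) • Δ i) + (d : ℝ) • (-β)

lemma IsSameSignComb.neg {β a : V} (ha : IsSameSignComb Δ I β a) :
    IsSameSignComb Δ I β (-a) := by
  obtain ⟨c, d, hsgn, hcI, rfl⟩ := ha
  refine ⟨-c, -d, ?_, fun i hi => by simp [hcI i hi], ?_⟩
  · rcases hsgn with ⟨hc, hd⟩ | ⟨hc, hd⟩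
    · exact Or.inr ⟨fun i => neg_nonpos.2 (hc i), neg_nonpos.2 hd⟩
    · exact Or.inl ⟨fun i => neg_nonneg.2 (hc i), neg_nonneg.2 hd⟩
  · simp only [Pi.neg_apply, Int.cast_neg, neg_smul, Finset.sum_neg_distrib, neg_add]

lemma IsNNCombOff.isSameSignComb {β v : V} (hv : IsNNCombOff Δ I v) :
    IsSameSignComb Δ I β v := by
  obtain ⟨c, hcI, rfl⟩ := hv
  exact ⟨fun i => c i, 0, Or.inl ⟨fun i => Int.natCast_nonneg _, le_rfl⟩,
    fun i hi => by simp [hcI i hi], by simp⟩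

lemma IsNNCombOff.isSameSignComb_of_sub {β a : V} {k : ℕ}
    (h : IsNNCombOff Δ I ((k : ℝ) • β - a)) : IsSameSignComb Δ I β a := by
  obtain ⟨c, hcI, hc⟩ := h
  refine ⟨fun i => -(c i : ℤ), -k, Or.inr ⟨fun i => by simp, by simp⟩,
    fun i hi => by simp [hcI i hi], ?_⟩
  rw [← sub_sub_cancel ((k : ℝ) • β) a, hc]
  simp only [Int.cast_neg, Int.cast_natCast, neg_smul, Finset.sum_neg_distrib, smul_neg,
    neg_neg]
  abel

end

namespace IsIrreducibleRootSystem

variable {V : Type*} [NormedAddCommGroup V] [InnerProductSpace ℝ V] {n : ℕ}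
  {Φ : Finset V} {Δ : Fin n → V}

lemma ne_zero (hΦ : IsIrreducibleRootSystem Φ Δ) {a : V} (ha : a ∈ Φ) : a ≠ 0 :=
  ne_of_mem_of_not_mem ha hΦ.zero_not_mem

lemma inner_self_pos (hΦ : IsIrreducibleRootSystem Φ Δ) {a : V} (ha : a ∈ Φ) :
    0 < ⟪a, a⟫ :=
  real_inner_self_pos.2 (hΦ.ne_zero ha)

lemma neg_mem (hΦ : IsIrreducibleRootSystem Φ Δ) {a : V} (ha : a ∈ Φ) : -a ∈ Φ := by
  have h := hΦ.reflect_mem a ha a ha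
  rwa [(coPair_eq_iff (hΦ.ne_zero ha) a 2).2 (by rw [real_inner_self_eq_norm_sq]), two_smul,
    sub_add_cancel_left] at h

/-- The reflection `s_c` maps `σ` to a root of the same length, and `s_c σ - σ` is a nonzero
multiple of `c` as soon as `⟪c, σ⟫ ≠ 0`. -/
lemma mem_span_rootsOfLength_of_inner_ne_zero (hΦ : IsIrreducibleRootSystem Φ Δ) {r c σ : V}
    (hc : c ∈ Φ) (hσ : σ ∈ rootsOfLength Φ r) (hne : ⟪c, σ⟫ ≠ 0) :
    c ∈ Submodule.span ℝ (rootsOfLength Φ r) := by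
  obtain ⟨k, hk⟩ : ∃ k, coPair c σ = k := ⟨_, rfl⟩
  have hk' := (coPair_eq_iff (hΦ.ne_zero hc) σ k).1 hk
  have hk0 : k ≠ 0 := by
    rintro rfl
    exact hne (by rw [real_inner_comm]; linarith)
  have hrefl : σ - k • c ∈ rootsOfLength Φ r := by
    refine ⟨hk ▸ hΦ.reflect_mem c hc σ hσ.1, ?_⟩
    rw [← hσ.2, real_inner_sub_sub_self, real_inner_smul_right, real_inner_smul_left,
      real_inner_smul_right]
    linear_combination -k * hk'
  have hkc : k • c ∈ Submodule.span ℝ (rootsOfLength Φ r) := by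
    simpa using Submodule.sub_mem _ (Submodule.subset_span hσ) (Submodule.subset_span hrefl)
  simpa [smul_smul, hk0] using Submodule.smul_mem _ k⁻¹ hkc

/-- A root outside the span is orthogonal to every root of length `‖r‖`, hence to the whole span;
irreducibility leaves no such root. -/
lemma mem_span_rootsOfLength (hΦ : IsIrreducibleRootSystem Φ Δ) {r b : V} (hr : r ∈ Φ)
    (hb : b ∈ Φ) : b ∈ Submodule.span ℝ (rootsOfLength Φ r) := by
  classical
  set U := Submodule.span ℝ (rootsOfLength Φ r)
  suffices hU : Φ.filter (· ∈ U) = Φ by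
    exact (Finset.mem_filter.1 (hU ▸ hb)).2
  refine hΦ.irreducible _ (Finset.filter_subset _ _)
    ⟨r, Finset.mem_filter.2 ⟨hr, Submodule.subset_span ⟨hr, rfl⟩⟩⟩ ?_
  intro a ha c hc hcU
  have horth : ∀ σ ∈ rootsOfLength Φ r, ⟪c, σ⟫ = 0 := fun σ hσ => by
    by_contra hne
    exact hcU (Finset.mem_filter.2 ⟨hc, hΦ.mem_span_rootsOfLength_of_inner_ne_zero hc hσ hne⟩)
  rw [real_inner_comm]
  exact inner_eq_zero_of_mem_span horth (Finset.mem_filter.1 ha).2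

lemma exists_mem_rootsOfLength_inner_ne_zero (hΦ : IsIrreducibleRootSystem Φ Δ) {r b : V}
    (hr : r ∈ Φ) (hb : b ∈ Φ) : ∃ σ ∈ rootsOfLength Φ r, ⟪b, σ⟫ ≠ 0 := by
  by_contra! horth
  exact (hΦ.inner_self_pos hb).ne'
    (inner_eq_zero_of_mem_span horth (hΦ.mem_span_rootsOfLength hr hb))

/-- If the root `b` is longer than the root `a` and `⟪a, b⟫ > 0`, the integers
`q = b*(a)` and `p = a*(b)` satisfy `0 < q < p` and `pq ≤ 4`, so `q = 1` and `p ≥ 2`. -/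
lemma two_inner_eq_of_lt (hΦ : IsIrreducibleRootSystem Φ Δ) {a b : V} (ha : a ∈ Φ)
    (hb : b ∈ Φ) (hlt : ⟪a, a⟫ < ⟪b, b⟫) (hpos : 0 < ⟪a, b⟫) :
    2 * ⟪a, b⟫ = ⟪b, b⟫ ∧ 2 * ⟪a, a⟫ ≤ ⟪b, b⟫ := by
  have hA := hΦ.inner_self_pos ha
  have hB := hΦ.inner_self_pos hb
  obtain ⟨q, hq⟩ := hΦ.crystallographic b hb a ha
  obtain ⟨p, hp⟩ := hΦ.crystallographic a ha b hb
  rw [coPair_eq_iff (hΦ.ne_zero hb)] at hq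
  rw [coPair_eq_iff (hΦ.ne_zero ha), real_inner_comm] at hp
  have hq0 : (0 : ℝ) < q := by nlinarith
  have hqp : (q : ℝ) < p := by nlinarith
  have hpq : (p : ℝ) * q ≤ 4 := by
    have hcs := real_inner_mul_inner_self_le a b
    nlinarith [mul_pos hA hB]
  have hq1 : q = 1 := by
    have : (0 : ℤ) < q := by exact_mod_cast hq0
    have : q < p := by exact_mod_cast hqp
    have : p * q ≤ 4 := by exact_mod_cast hpq
    nlinarith
  have hp2 : (2 : ℝ) ≤ p := by
    have : (1 : ℤ) < p := by exact_mod_cast hq1 ▸ hqp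
    exact_mod_cast this
  rw [hq1, Int.cast_one, one_mul] at hq
  exact ⟨hq, by nlinarith⟩

end IsIrreducibleRootSystem

section Dominant

variable {V : Type*} [NormedAddCommGroup V] [InnerProductSpace ℝ V] {n : ℕ}
  {Φ : Finset V} {Δ : Fin n → V} {I : Finset (Fin n)} {u β : V}

namespace IsFundamentalWeights

variable {ω : Fin n → V}

lemma ne_zero (hω : IsFundamentalWeights Δ ω) (j : Fin n) : Δ j ≠ 0 := by
  intro h
  simpa [coPair, h] using hω j j

lemma two_inner (hω : IsFundamentalWeights Δ ω) (i j : Fin n) :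
    2 * ⟪ω i, Δ j⟫ = if i = j then ⟪Δ j, Δ j⟫ else 0 := by
  have h := (coPair_eq_iff (hω.ne_zero j) (ω i) _).1 (hω i j)
  split_ifs at h ⊢ <;> simpa using h

lemma two_inner_sum_smul (hω : IsFundamentalWeights Δ ω) (lam : Fin n → ℝ) (j : Fin n) :
    2 * ⟪∑ i ∈ I, lam i • ω i, Δ j⟫ = if j ∈ I then lam j * ⟪Δ j, Δ j⟫ else 0 := by
  simp only [sum_inner, real_inner_smul_left, Finset.mul_sum, mul_left_comm (2 : ℝ),
    hω.two_inner, mul_ite, mul_zero, Finset.sum_ite_eq']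

lemma inner_sum_smul_nonneg (hω : IsFundamentalWeights Δ ω) {lam : Fin n → ℝ}
    (hlam : ∀ i ∈ I, 0 < lam i) (j : Fin n) : 0 ≤ ⟪∑ i ∈ I, lam i • ω i, Δ j⟫ := by
  have h := hω.two_inner_sum_smul (I := I) lam j
  split_ifs at h with hj
  · nlinarith [hlam j hj, real_inner_self_nonneg (x := Δ j)]
  · linarith

lemma inner_sum_smul_pos (hω : IsFundamentalWeights Δ ω) {lam : Fin n → ℝ}
    (hlam : ∀ i ∈ I, 0 < lam i) {j : Fin n} (hj : j ∈ I) :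
    0 < ⟪∑ i ∈ I, lam i • ω i, Δ j⟫ := by
  have h := hω.two_inner_sum_smul (I := I) lam j
  rw [if_pos hj] at h
  nlinarith [hlam j hj, real_inner_self_pos.2 (hω.ne_zero j)]

end IsFundamentalWeights

lemma IsNNComb.inner_nonneg (hdom : ∀ j, 0 ≤ ⟪u, Δ j⟫) {v : V} (hv : IsNNComb Δ v) :
    0 ≤ ⟪u, v⟫ := by
  obtain ⟨c, rfl⟩ := hv
  rw [inner_sum]
  exact Finset.sum_nonneg fun i _ => by
    rw [real_inner_smul_right]
    exact mul_nonneg (Nat.cast_nonneg _) (hdom i)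

lemma IsNNComb.isNNCombOff_of_inner_eq_zero (hdom : ∀ j, 0 ≤ ⟪u, Δ j⟫)
    (hsupp : ∀ j ∈ I, 0 < ⟪u, Δ j⟫) {v : V} (hv : IsNNComb Δ v) (h0 : ⟪u, v⟫ = 0) :
    IsNNCombOff Δ I v := by
  obtain ⟨c, rfl⟩ := hv
  refine ⟨c, fun i hi => ?_, rfl⟩
  simp only [inner_sum, real_inner_smul_right] at h0
  have hi0 := (Finset.sum_eq_zero_iff_of_nonneg fun j _ =>
    mul_nonneg (Nat.cast_nonneg _) (hdom j)).1 h0 i (Finset.mem_univ i)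
  exact_mod_cast (mul_eq_zero.1 hi0).resolve_right (hsupp i hi).ne'

namespace IsMaximalShortRoot

open IsIrreducibleRootSystem

lemma two_inner_le (hβ : IsMaximalShortRoot Φ Δ β) (hdom : ∀ j, 0 ≤ ⟪u, Δ j⟫)
    (hβu : 2 * ⟪u, β⟫ = ⟪β, β⟫) {σ : V} (hσ : σ ∈ rootsOfLength Φ β) :
    2 * ⟪u, σ⟫ ≤ ⟪β, β⟫ := by
  have h := (hβ.2.2 σ hσ.1 (norm_eq_norm_iff_inner_self_eq.2 hσ.2)).inner_nonneg hdom
  rw [inner_sub_right] at h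
  linarith

lemma isNNCombOff_sub (hβ : IsMaximalShortRoot Φ Δ β) (hdom : ∀ j, 0 ≤ ⟪u, Δ j⟫)
    (hsupp : ∀ j ∈ I, 0 < ⟪u, Δ j⟫) (hβu : 2 * ⟪u, β⟫ = ⟪β, β⟫) {σ : V}
    (hσ : σ ∈ rootsOfLength Φ β) (hσu : 2 * ⟪u, σ⟫ = ⟪β, β⟫) : IsNNCombOff Δ I (β - σ) :=
  (hβ.2.2 σ hσ.1 (norm_eq_norm_iff_inner_self_eq.2 hσ.2)).isNNCombOff_of_inner_eq_zero hdom
    hsupp (by rw [inner_sub_right]; linarith)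

/-- A long root `b` with `2⟪u, b⟫ = ⟪b, b⟫` splits as `σ + (b - σ)` with two short roots,
each attaining the bound `2⟪u, σ⟫ ≤ ⟪β, β⟫`. -/
lemma isNNCombOff_two_smul_sub (hΦ : IsIrreducibleRootSystem Φ Δ)
    (hβ : IsMaximalShortRoot Φ Δ β) (hdom : ∀ j, 0 ≤ ⟪u, Δ j⟫)
    (hsupp : ∀ j ∈ I, 0 < ⟪u, Δ j⟫) (hβu : 2 * ⟪u, β⟫ = ⟪β, β⟫) {b : V} (hb : b ∈ Φ)
    (hlong : ⟪β, β⟫ < ⟪b, b⟫) (hbu : 2 * ⟪u, b⟫ = ⟪b, b⟫) :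
    IsNNCombOff Δ I ((2 : ℝ) • β - b) := by
  obtain ⟨σ₀, hσ₀, hne⟩ := hΦ.exists_mem_rootsOfLength_inner_ne_zero hβ.1 hb
  obtain ⟨σ, hσ, hpos⟩ : ∃ σ ∈ rootsOfLength Φ β, 0 < ⟪σ, b⟫ := by
    rcases hne.lt_or_gt with hlt | hgt
    · refine ⟨-σ₀, ⟨hΦ.neg_mem hσ₀.1, by rw [inner_neg_neg]; exact hσ₀.2⟩, ?_⟩
      rw [inner_neg_left, real_inner_comm]
      linarith
    · exact ⟨σ₀, hσ₀, by rwa [real_inner_comm]⟩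
  obtain ⟨hσb, hlen⟩ := hΦ.two_inner_eq_of_lt hσ.1 hb (hσ.2 ▸ hlong) hpos
  have hτ : b - σ ∈ rootsOfLength Φ β := by
    refine ⟨?_, ?_⟩
    · have h := hΦ.neg_mem (hΦ.reflect_mem b hb σ hσ.1)
      rwa [(coPair_eq_iff (hΦ.ne_zero hb) σ 1).2 (by rw [one_mul, ← hσb, real_inner_comm]),
        one_smul, neg_sub] at h
    · rw [real_inner_sub_sub_self, ← hσ.2]
      linarith [real_inner_comm σ b]
  have hσ_le := hβ.two_inner_le hdom hβu hσ
  have hτ_le := hβ.two_inner_le hdom hβu hτ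
  rw [inner_sub_right] at hτ_le
  have hσu : 2 * ⟪u, σ⟫ = ⟪β, β⟫ := by linarith [hσ.2]
  have hτu : 2 * ⟪u, b - σ⟫ = ⟪β, β⟫ := by rw [inner_sub_right]; linarith [hσ.2]
  convert (hβ.isNNCombOff_sub hdom hsupp hβu hσ hσu).add
    (hβ.isNNCombOff_sub hdom hsupp hβu hτ hτu) using 1
  rw [two_smul]
  abel

lemma exists_isNNCombOff_natCast_smul_sub (hΦ : IsIrreducibleRootSystem Φ Δ)
    (hβ : IsMaximalShortRoot Φ Δ β) (hdom : ∀ j, 0 ≤ ⟪u, Δ j⟫)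
    (hsupp : ∀ j ∈ I, 0 < ⟪u, Δ j⟫) (hβu : coPair β u = 1) {b : V} (hb : b ∈ Φ)
    (hbu : coPair b u = 1) : ∃ k : ℕ, IsNNCombOff Δ I ((k : ℝ) • β - b) := by
  rw [coPair_eq_iff (hΦ.ne_zero hβ.1), one_mul] at hβu
  rw [coPair_eq_iff (hΦ.ne_zero hb), one_mul] at hbu
  have hle : ⟪β, β⟫ ≤ ⟪b, b⟫ := by
    rw [real_inner_self_eq_norm_sq, real_inner_self_eq_norm_sq]
    gcongr
    exact hβ.2.1 b hb
  rcases hle.eq_or_lt with heq | hlt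
  · exact ⟨1, by simpa using hβ.isNNCombOff_sub hdom hsupp hβu ⟨hb, heq.symm⟩ (heq ▸ hbu)⟩
  · exact ⟨2, by simpa using hβ.isNNCombOff_two_smul_sub hΦ hdom hsupp hβu hb hlt hbu⟩

end IsMaximalShortRoot

end Dominant

theorem root_subsystem_base_on_cell_boundary_general
    {V : Type*} [NormedAddCommGroup V] [InnerProductSpace ℝ V] {n : ℕ}
    (Φ : Finset V) (Δ : Fin n → V) (hΦ : IsIrreducibleRootSystem Φ Δ)
    (ω : Fin n → V) (hω : IsFundamentalWeights Δ ω)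
    (β : V) (hβ : IsMaximalShortRoot Φ Δ β)
    (I : Finset (Fin n)) (lam : Fin n → ℝ) (hlam : ∀ i ∈ I, 0 < lam i)
    (u : V) (hu : u = ∑ i ∈ I, lam i • ω i)
    (hcell : coPair β u = 1) :
    ∀ a : V,
      (∃ b : V, IsPositiveRoot Φ Δ b ∧ (coPair b u = 0 ∨ coPair b u = 1) ∧
        (a = b ∨ a = -b)) →
      ∃ (c : Fin n → ℤ) (d : ℤ),
        (((∀ i, 0 ≤ c i) ∧ 0 ≤ d) ∨ ((∀ i, c i ≤ 0) ∧ d ≤ 0)) ∧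
        (∀ i ∈ I, c i = 0) ∧
        a = (∑ i, (c i : ℝ) • Δ i) + (d : ℝ) • (-β) := by
  have hdom : ∀ j, 0 ≤ ⟪u, Δ j⟫ := fun j => hu ▸ hω.inner_sum_smul_nonneg hlam j
  have hsupp : ∀ j ∈ I, 0 < ⟪u, Δ j⟫ := fun j hj => hu ▸ hω.inner_sum_smul_pos hlam hj
  rintro a ⟨b, ⟨hbΦ, hbNN⟩, hbu, hab⟩
  have hb : IsSameSignComb Δ I β b := by
    rcases hbu with hbu | hbu
    · exact (hbNN.isNNCombOff_of_inner_eq_zero hdom hsupp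
        (coPair_eq_zero_iff.1 hbu)).isSameSignComb
    · obtain ⟨k, hk⟩ := hβ.exists_isNNCombOff_natCast_smul_sub hΦ hdom hsupp hcell hbΦ hbu
      exact hk.isSameSignComb_of_sub
  rcases hab with rfl | rfl
  exacts [hb, hb.neg]

/-- Let `u = ∑_{i ∈ I} λᵢωᵢ` (with `λᵢ > 0`) lie in the fundamental
Weyl cell with `β*(u) = 1` and `u` not a fundamental dominant weight. Then every element of
`Φ_u = {±α : α ∈ Φ⁺, α*(u) ∈ {0,1}}` is an integral combination of the vectors
`{αᵢ : i ∉ I} ∪ {-β}` with all coefficients nonnegative or all nonpositive. -/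
theorem root_subsystem_base_on_cell_boundary
    {V : Type*} [NormedAddCommGroup V] [InnerProductSpace ℝ V] {n : ℕ}
    (Φ : Finset V) (Δ : Fin n → V) (hΦ : IsIrreducibleRootSystem Φ Δ)
    (ω : Fin n → V) (hω : IsFundamentalWeights Δ ω)
    (β : V) (hβ : IsMaximalShortRoot Φ Δ β)
    (I : Finset (Fin n)) (lam : Fin n → ℝ) (hlam : ∀ i ∈ I, 0 < lam i)
    (u : V) (hu : u = ∑ i ∈ I, lam i • ω i)
    (hcell : coPair β u = 1) (huΩ : ∀ i, u ≠ ω i) :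
    ∀ a : V,
      (∃ b : V, IsPositiveRoot Φ Δ b ∧ (coPair b u = 0 ∨ coPair b u = 1) ∧
        (a = b ∨ a = -b)) →
      ∃ (c : Fin n → ℤ) (d : ℤ),
        (((∀ i, 0 ≤ c i) ∧ 0 ≤ d) ∨ ((∀ i, c i ≤ 0) ∧ d ≤ 0)) ∧
        (∀ i ∈ I, c i = 0) ∧
        a = (∑ i, (c i : ℝ) • Δ i) + (d : ℝ) • (-β) :=
  root_subsystem_base_on_cell_boundary_general Φ Δ hΦ ω hω β hβ I lam hlam u hu hcell
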